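/- (Reducible PLCP recurrence.) For every i ∈ [1, n) such that PLCP[i] is reducible (i.e., ISA[i] ≥ 1 and BWT[ISA[i]] = BWT[ISA[i]−1]), it holds that PLCP[i] = PLCP[i−1] − 1. -/
import Mathlib


/-- The suffix `T[i..n−1]` of a text of length `n`, as a list. -/
def sfx {α : Type*} (T : ℕ → α) (n i : ℕ) : List α :=
  (List.range (n - i)).map (fun k => T (i + k))

/-- Length of the longest common prefix of two strings (as lists). -/
def lcp {α : Type*} [DecidableEq α] : List α → List α → ℕ
  | a :: as, b :: bs => if a = b then lcp as bs + 1 else 0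
  | _, _ => 0

lemma sfx_cons {α : Type*} (T : ℕ → α) {n i : ℕ} (h : i < n) :
    sfx T n i = T i :: sfx T n (i + 1) := by
  have h1 : n - i = (n - (i + 1)) + 1 := by omega
  simp only [sfx, h1, List.range_succ_eq_map, List.map_cons, List.map_map, Nat.add_zero]
  refine congrArg _ (List.map_congr_left fun k _ => ?_)
  simp only [Function.comp_apply]
  congr 1
  omega

lemma lcp_cons {α : Type*} [DecidableEq α] (a : α) (u v : List α) :
    lcp (a :: u) (a :: v) = lcp u v + 1 := by
  simp [lcp]

lemma lex_cons_cases {α : Type*} [LinearOrder α] {a b : α} {u v : List α}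
    (h : (a :: u) < (b :: v)) : a < b ∨ (a = b ∧ u < v) := by
  have h' : List.Lex (· < ·) (a :: u) (b :: v) := h
  cases h' with
  | cons h => exact Or.inr ⟨rfl, h⟩
  | rel h => exact Or.inl h

lemma lex_cons_of {α : Type*} [LinearOrder α] (a : α) {u v : List α}
    (h : u < v) : (a :: u) < (a :: v) :=
  List.Lex.cons h

/-- reducible PLCP recurrence: if `PLCP[i]` is reducible,
i.e. `ISA[i] ≥ 1` and `BWT[ISA[i]] = BWT[ISA[i]−1]`, then
`PLCP[i] = PLCP[i−1] − 1` (stated as `PLCP[i] + 1 = PLCP[i−1]`). -/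
theorem plcp_reducible_recurrence
    {α : Type*} [LinearOrder α] (n : ℕ) (hn : 1 ≤ n) (T : ℕ → α)
    (hsent : ∀ i, i < n - 1 → T (n - 1) < T i)
    (SA ISA : ℕ → ℕ)
    (hSA : ∀ i, i < n → SA i < n)
    (hmono : ∀ i j, i < j → j < n → sfx T n (SA i) < sfx T n (SA j))
    (hISA : ∀ i, i < n → ISA i < n ∧ ISA (SA i) = i ∧ SA (ISA i) = i)
    (BWT : ℕ → α)
    (hBWT : ∀ k, k < n → BWT k = T ((SA k + n - 1) % n))
    (PLCP : ℕ → ℕ)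
    (hPLCP : ∀ i, i < n → PLCP i =
      if ISA i = 0 then 0
      else lcp (sfx T n (SA (ISA i - 1))) (sfx T n (SA (ISA i))))
    (i : ℕ) (hi1 : 1 ≤ i) (hi2 : i < n)
    (hred1 : 1 ≤ ISA i) (hred2 : BWT (ISA i) = BWT (ISA i - 1)) :
    PLCP i + 1 = PLCP (i - 1) := by
  -- helper: mod computation
  have hmod : ∀ m : ℕ, 1 ≤ m → m < n → (m + n - 1) % n = m - 1 := by
    intro m h1 h2
    have : m + n - 1 = (m - 1) + n := by omega
    rw [this, Nat.add_mod_right, Nat.mod_eq_of_lt (by omega)]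
  -- ISA is strictly monotone w.r.t. suffix order
  have isa_lt : ∀ a b, a < n → b < n → sfx T n a < sfx T n b → ISA a < ISA b := by
    intro a b ha hb h
    obtain ⟨hxa, -, hsia⟩ := hISA a ha
    obtain ⟨hxb, -, hsib⟩ := hISA b hb
    rcases lt_trichotomy (ISA a) (ISA b) with h' | h' | h'
    · exact h'
    · exfalso; rw [← hsia, ← hsib, h'] at h; exact lt_irrefl _ h
    · exfalso
      have := hmono _ _ h' hxa
      rw [hsia, hsib] at this
      exact absurd h (not_lt.2 this.le)
  set p := ISA i with hp
  obtain ⟨hpn, -, hSAp⟩ := hISA i hi2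
  have hp1n : p - 1 < n := by omega
  set j := SA (p - 1) with hj
  have hjn : j < n := hSA _ hp1n
  have hji : sfx T n j < sfx T n i := by
    have := hmono (p - 1) p (by omega) hpn
    rwa [hSAp] at this
  -- BWT values
  have hBi : BWT p = T (i - 1) := by
    rw [hBWT p hpn, hSAp, hmod i hi1 hi2]
  -- j ≥ 1
  have hj1 : 1 ≤ j := by
    by_contra h
    have hj0 : j = 0 := by omega
    have hB : BWT (p - 1) = T (n - 1) := by
      rw [hBWT _ hp1n, ← hj, hj0]
      simp [Nat.mod_eq_of_lt (show n - 1 < n by omega)]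
    have hTeq : T (i - 1) = T (n - 1) := by rw [← hBi, hred2, hB]
    have : i - 1 < n - 1 := by omega
    exact absurd (hsent _ this) (by rw [hTeq]; exact lt_irrefl _)
  have hBj : BWT (p - 1) = T (j - 1) := by
    rw [hBWT _ hp1n, ← hj, hmod j hj1 hjn]
  have hc : T (i - 1) = T (j - 1) := by rw [← hBi, hred2, hBj]
  -- cons forms
  have hconsI : sfx T n (i - 1) = T (i - 1) :: sfx T n i := by
    have := sfx_cons T (show i - 1 < n by omega)
    rwa [show i - 1 + 1 = i by omega] at this
  have hconsJ : sfx T n (j - 1) = T (i - 1) :: sfx T n j := by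
    have := sfx_cons T (show j - 1 < n by omega)
    rw [show j - 1 + 1 = j by omega] at this
    rw [this, ← hc]
  have hji' : sfx T n (j - 1) < sfx T n (i - 1) := by
    rw [hconsI, hconsJ]; exact lex_cons_of _ hji
  -- rank of i - 1
  obtain ⟨hqn, -, hSAq⟩ := hISA (i - 1) (by omega)
  set q := ISA (i - 1) with hq
  have hjq : ISA (j - 1) < q := isa_lt _ _ (by omega) (by omega) hji'
  have hq1 : 1 ≤ q := by omega
  -- the predecessor of i-1 in suffix order is j-1
  set k := SA (q - 1) with hk
  have hkn : k < n := hSA _ (by omega)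
  have hki : sfx T n k < sfx T n (i - 1) := by
    have := hmono (q - 1) q (by omega) hqn
    rwa [hSAq] at this
  have hjk : sfx T n (j - 1) ≤ sfx T n k := by
    obtain ⟨-, -, hs⟩ := hISA (j - 1) (by omega)
    rcases eq_or_lt_of_le (show ISA (j - 1) ≤ q - 1 by omega) with h | h
    · rw [← hs, h, ← hk]
    · have h2 := hmono _ _ h (by omega)
      rw [hs, ← hk] at h2
      exact h2.le
  have hkj : k = j - 1 := by
    by_contra hne
    have hjk' : sfx T n (j - 1) < sfx T n k := by
      rcases lt_or_eq_of_le hjk with h | h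
      · exact h
      · exfalso
        have hlen := congrArg List.length h
        simp only [sfx, List.length_map, List.length_range] at hlen
        omega
    -- sfx k = T k :: sfx (k+1)
    have hconsK : sfx T n k = T k :: sfx T n (k + 1) := sfx_cons T hkn
    rw [hconsJ, hconsK] at hjk'
    rw [hconsK, hconsI] at hki
    -- head of k equals c
    have hhead : T k = T (i - 1) := by
      rcases lex_cons_cases hjk' with h1 | ⟨h1, -⟩
      · rcases lex_cons_cases hki with h2 | ⟨h2, -⟩
        · exact absurd (h1.trans h2) (lt_irrefl _)
        · exact h2
      · exact h1.symm
    -- k ≠ n - 1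
    have hkn1 : k < n - 1 := by
      by_contra h
      have hk' : k = n - 1 := by omega
      have hlt := hsent (i - 1) (by omega)
      rw [← hk', hhead] at hlt
      exact lt_irrefl _ hlt
    have htails1 : sfx T n j < sfx T n (k + 1) := by
      rcases lex_cons_cases hjk' with h1 | ⟨-, h1⟩
      · exact absurd h1 (by rw [hhead]; exact lt_irrefl _)
      · exact h1
    have htails2 : sfx T n (k + 1) < sfx T n i := by
      rcases lex_cons_cases hki with h1 | ⟨-, h1⟩
      · exact absurd h1 (by rw [hhead]; exact lt_irrefl _)
      · exact h1
    obtain ⟨-, hisaj, -⟩ := hISA (p - 1) hp1n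
    rw [← hj] at hisaj
    have h1 : ISA j < ISA (k + 1) := isa_lt j (k + 1) hjn (by omega) htails1
    have h2 : ISA (k + 1) < ISA i := isa_lt (k + 1) i (by omega) hi2 htails2
    rw [hisaj] at h1
    rw [← hp] at h2
    omega
  -- conclude
  have hPi : PLCP i = lcp (sfx T n j) (sfx T n i) := by
    rw [hPLCP i hi2, if_neg (by omega), ← hp, ← hj, hSAp]
  have hPi1 : PLCP (i - 1) = lcp (sfx T n (j - 1)) (sfx T n (i - 1)) := by
    rw [hPLCP (i - 1) (by omega), if_neg (by omega), ← hq, hSAq, ← hk, hkj]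
  rw [hPi, hPi1, hconsI, hconsJ, lcp_cons]
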